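/- arXiv:1902.06206 — 2 statements merged into one kernel-verified Lean document; each statement's English description precedes it below -/
import Mathlib

section
/- The poset of finite partial linear orders on κ (conditions are pairs (A, ≤) with A a finite subset of κ and ≤ a linear order on A, ordered by: p ≤ q iff A_q ⊆ A_p and ≤_q is the restriction of ≤_p to A_q) has the Knaster property: every uncountable family of conditions contains an uncountable subfamily of pairwise compatible conditions. -/
/-!
Thin out the family three times: keep one condition per domain (each finite domain carries only
finitely many orders); by the Δ-system lemma, pass to uncountably many conditions whose domains
pairwise meet in one finite root `R`; by pigeonhole, pass to uncountably many that induce the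
same order on `R`. Any two of these agree on the intersection of their domains, and such
conditions are compatible: the reflexive-transitive closure of the union of their orders is a
partial order, and a linear extension of it (Szpilrajn) restricts to a common extension.
-/

/-- A condition: a finite subset `A` of `κ` together with a linear order on `A`
(coded as a relation `r` supported on `A`). -/
structure FinLinOrd (κ : Type*) where
  A : Finset κ
  r : κ → κ → Prop
  supp : ∀ x y, r x y → x ∈ A ∧ y ∈ A
  refl : ∀ x ∈ A, r x x
  antisymm : ∀ x y, r x y → r y x → x = y
  trans : ∀ x y z, r x y → r y z → r x z
  total : ∀ x ∈ A, ∀ y ∈ A, r x y ∨ r y x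

namespace FinLinOrd

variable {κ : Type*}

/-- `p` extends `q` : the domain grows and the order restricts. -/
def Ext (p q : FinLinOrd κ) : Prop :=
  q.A ⊆ p.A ∧ ∀ x ∈ q.A, ∀ y ∈ q.A, (q.r x y ↔ p.r x y)

/-- Two conditions are compatible if they have a common extension. -/
def Compatible (p q : FinLinOrd κ) : Prop :=
  ∃ s : FinLinOrd κ, s.Ext p ∧ s.Ext q

/-- A filter : nonempty, upward closed, downward directed set of conditions. -/
def IsPFilter (G : Set (FinLinOrd κ)) : Prop :=
  G.Nonempty ∧ (∀ p ∈ G, ∀ q, p.Ext q → q ∈ G) ∧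
    (∀ p ∈ G, ∀ q ∈ G, ∃ s ∈ G, s.Ext p ∧ s.Ext q)

/-- The generic relation determined by a set of conditions. -/
def genRel (G : Set (FinLinOrd κ)) (x y : κ) : Prop :=
  ∃ p ∈ G, p.r x y

end FinLinOrd

open FinLinOrd

section Countable

variable {α β : Type*}

lemma exists_not_countable_fiber [Countable β] (f : α → β) {s : Set α} (hs : ¬s.Countable) :
    ∃ b, ¬{a ∈ s | f a = b}.Countable := by
  by_contra! h
  exact hs ((Set.countable_iUnion h).mono fun a ha =>
    Set.mem_iUnion_of_mem (f a) (show a ∈ {x ∈ s | f x = f a} from ⟨ha, rfl⟩))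

lemma not_countable_image_of_countable_fibers (f : α → β) {s : Set α} (hs : ¬s.Countable)
    (hf : ∀ b, {a ∈ s | f a = b}.Countable) : ¬(f '' s).Countable := fun h =>
  hs ((h.biUnion fun b _ => hf b).mono fun a ha =>
    Set.mem_biUnion (Set.mem_image_of_mem f ha) (show a ∈ {a ∈ s | f a = f a} from ⟨ha, rfl⟩))

lemma exists_maximal_pairwiseDisjoint [PartialOrder α] [OrderBot α] (F : Set α) :
    ∃ D ⊆ F, D.PairwiseDisjoint id ∧ ∀ a ∈ F, a ∉ D → ∃ b ∈ D, ¬Disjoint a b := by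
  obtain ⟨D, hD⟩ := zorn_subset {D | D ⊆ F ∧ D.PairwiseDisjoint id} fun c hc hchain =>
    ⟨⋃₀ c, ⟨Set.sUnion_subset fun D hD => (hc hD).1,
      (Set.pairwise_sUnion hchain.directedOn).2 fun D hD => (hc hD).2⟩,
      fun _ => Set.subset_sUnion_of_mem⟩
  refine ⟨D, hD.prop.1, hD.prop.2, fun a ha haD => ?_⟩
  by_contra! hdisj
  exact haD (hD.mem_of_prop_insert
    ⟨Set.insert_subset ha hD.prop.1, hD.prop.2.insert fun b hb _ => hdisj b hb⟩)

/-- If no point lies in uncountably many members of `F`, a maximal disjoint subfamily `D`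
cannot be countable: every member of `F` would meet the countable set `⋃ D`. -/
lemma exists_not_countable_pairwiseDisjoint {F : Set (Finset α)} (hF : ¬F.Countable)
    (hpt : ∀ x, {A ∈ F | x ∈ A}.Countable) :
    ∃ G ⊆ F, ¬G.Countable ∧ G.PairwiseDisjoint id := by
  obtain ⟨D, hDF, hD, hmax⟩ := exists_maximal_pairwiseDisjoint F
  refine ⟨D, hDF, fun hDc => hF ?_, hD⟩
  have hcover : F ⊆ D ∪ ⋃ x ∈ ⋃ B ∈ D, (B : Set α), {A ∈ F | x ∈ A} := by
    intro A hA
    by_cases hAD : A ∈ D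
    · exact .inl hAD
    obtain ⟨B, hB, hAB⟩ := hmax A hA hAD
    obtain ⟨x, hxA, hxB⟩ := Finset.not_disjoint_iff.1 hAB
    exact .inr (Set.mem_biUnion (Set.mem_biUnion hB hxB) ⟨hA, hxA⟩)
  exact (hDc.union ((hDc.biUnion fun B _ => B.countable_toSet).biUnion fun x _ => hpt x)).mono
    hcover

end Countable

section DeltaSystem

variable {α : Type*} [DecidableEq α]

def IsDeltaSystem (F : Set (Finset α)) (R : Finset α) : Prop :=
  F.Pairwise fun A B => A ∩ B = R

/-- If some point lies in uncountably many members, remove it from them and recurse; otherwise an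
uncountable disjoint subfamily is a Δ-system with empty root. -/
lemma exists_isDeltaSystem_of_card_eq (n : ℕ) {F : Set (Finset α)}
    (hcard : ∀ A ∈ F, A.card = n) (hF : ¬F.Countable) :
    ∃ G ⊆ F, ¬G.Countable ∧ ∃ R, IsDeltaSystem G R := by
  induction n generalizing F with
  | zero =>
    exact absurd ((Set.countable_singleton ∅).mono fun A hA => Finset.card_eq_zero.1 (hcard A hA))
      hF
  | succ n ih =>
    by_cases hpt : ∀ x, {A ∈ F | x ∈ A}.Countable
    · obtain ⟨G, hGF, hG, hdisj⟩ := exists_not_countable_pairwiseDisjoint hF hpt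
      exact ⟨G, hGF, hG, ∅, fun A hA B hB hAB =>
        Finset.disjoint_iff_inter_eq_empty.1 (hdisj hA hB hAB)⟩
    obtain ⟨x, hx⟩ := not_forall.1 hpt
    set Fx := {A ∈ F | x ∈ A}
    have herase : Set.InjOn (Finset.erase · x) Fx := fun A hA B hB h => by
      rw [← Finset.insert_erase hA.2, ← Finset.insert_erase hB.2]
      exact congrArg (insert x) h
    obtain ⟨G', hG'F, hG', R, hR⟩ := ih (F := (Finset.erase · x) '' Fx)
      (by rintro _ ⟨A, hA, rfl⟩; rw [Finset.card_erase_of_mem hA.2, hcard A hA.1]; rfl)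
      (fun h => hx (Set.countable_of_injective_of_countable_image herase h))
    refine ⟨Fx ∩ (Finset.erase · x) ⁻¹' G', fun A hA => hA.1.1, fun h => hG' ?_, insert x R, ?_⟩
    · simpa [Set.image_inter_preimage, Set.inter_eq_right.2 hG'F] using h.image (Finset.erase · x)
    · rintro A ⟨hA, hAG⟩ B ⟨hB, hBG⟩ hAB
      rw [← Finset.insert_erase hA.2, ← Finset.insert_erase hB.2, ← Finset.insert_inter_distrib,
        hR hAG hBG (herase.ne hA hB hAB)]

theorem exists_isDeltaSystem {F : Set (Finset α)} (hF : ¬F.Countable) :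
    ∃ G ⊆ F, ¬G.Countable ∧ ∃ R, IsDeltaSystem G R := by
  obtain ⟨n, hn⟩ := exists_not_countable_fiber Finset.card hF
  obtain ⟨G, hG, hGc, hR⟩ := exists_isDeltaSystem_of_card_eq n (fun A hA => hA.2) hn
  exact ⟨G, hG.trans fun A hA => hA.1, hGc, hR⟩

end DeltaSystem


namespace FinLinOrd

variable {κ : Type*}

lemma ext_of_A_eq {p q : FinLinOrd κ} (hA : p.A = q.A)
    (hr : ∀ x ∈ p.A, ∀ y ∈ p.A, p.r x y ↔ q.r x y) : p = q := by
  have hrel : p.r = q.r := by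
    funext x y
    refine propext ⟨fun h => (hr x (p.supp x y h).1 y (p.supp x y h).2).1 h, fun h => ?_⟩
    exact (hr x (hA ▸ (q.supp x y h).1) y (hA ▸ (q.supp x y h).2)).2 h
  cases p
  cases q
  congr

lemma finite_setOf_A_eq (A : Finset κ) : {p : FinLinOrd κ | p.A = A}.Finite := by
  refine Set.Finite.of_finite_image (f := fun p (x y : A) => p.r x y) (Set.toFinite _) ?_
  intro p (hp : p.A = A) q (hq : q.A = A) hpq
  refine ext_of_A_eq (hp.trans hq.symm) fun x hx y hy => ?_
  subst hp
  exact iff_of_eq (congrFun (congrFun hpq ⟨x, hx⟩) ⟨y, hy⟩)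

lemma ext_refl (p : FinLinOrd κ) : p.Ext p :=
  ⟨subset_rfl, fun _ _ _ _ => Iff.rfl⟩

lemma compatible_refl (p : FinLinOrd κ) : Compatible p p :=
  ⟨p, p.ext_refl, p.ext_refl⟩

def restrict (s : κ → κ → Prop) [IsLinearOrder κ s] (U : Finset κ) : FinLinOrd κ where
  A := U
  r x y := x ∈ U ∧ y ∈ U ∧ s x y
  supp _ _ h := ⟨h.1, h.2.1⟩
  refl x hx := ⟨hx, hx, refl_of s x⟩
  antisymm _ _ h h' := antisymm_of s h.2.2 h'.2.2
  trans _ _ _ h h' := ⟨h.1, h'.2.1, trans_of s h.2.2 h'.2.2⟩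
  total x hx y hy := (total_of s x y).imp (fun h => ⟨hx, hy, h⟩) fun h => ⟨hy, hx, h⟩

lemma restrict_ext {s : κ → κ → Prop} [IsLinearOrder κ s] {U : Finset κ} {p : FinLinOrd κ}
    (hA : p.A ⊆ U) (hr : ∀ x y, p.r x y → s x y) : (restrict s U).Ext p := by
  refine ⟨hA, fun x hx y hy => ⟨fun h => ⟨hA hx, hA hy, hr x y h⟩, fun h => ?_⟩⟩
  rcases p.total x hx y hy with hxy | hyx
  · exact hxy
  · obtain rfl := antisymm_of s h.2.2 (hr y x hyx)
    exact p.refl x hx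

lemma compatible_of_le_linearOrder (s : κ → κ → Prop) [IsLinearOrder κ s] {p q : FinLinOrd κ}
    (hp : ∀ x y, p.r x y → s x y) (hq : ∀ x y, q.r x y → s x y) : Compatible p q := by
  classical
  exact ⟨restrict s (p.A ∪ q.A), restrict_ext Finset.subset_union_left hp,
    restrict_ext Finset.subset_union_right hq⟩

def joinRel (p q : FinLinOrd κ) (x y : κ) : Prop :=
  p.r x y ∨ q.r x y

section Agree

variable [DecidableEq κ] {p q : FinLinOrd κ} {x y z : κ}

def Agree (p q : FinLinOrd κ) : Prop :=
  ∀ x ∈ p.A ∩ q.A, ∀ y ∈ p.A ∩ q.A, p.r x y ↔ q.r x y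

lemma mem_inter_of_r_of_r (hp : p.r x y) (hq : q.r y z) : y ∈ p.A ∩ q.A :=
  Finset.mem_inter.2 ⟨(p.supp x y hp).2, (q.supp y z hq).1⟩

lemma mem_inter_of_r_of_r' (hq : q.r x y) (hp : p.r y z) : y ∈ p.A ∩ q.A :=
  Finset.mem_inter.2 ⟨(p.supp y z hp).1, (q.supp x y hq).2⟩

lemma joinRel_or_exists_of_joinRel_of_joinRel (hxy : joinRel p q x y) (hyz : joinRel p q y z) :
    joinRel p q x z ∨ ∃ c ∈ p.A ∩ q.A, joinRel p q x c ∧ joinRel p q c z := by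
  rcases hxy with hxy | hxy <;> rcases hyz with hyz | hyz
  · exact .inl (.inl (p.trans x y z hxy hyz))
  · exact .inr ⟨y, mem_inter_of_r_of_r hxy hyz, .inl hxy, .inr hyz⟩
  · exact .inr ⟨y, mem_inter_of_r_of_r' hxy hyz, .inr hxy, .inl hyz⟩
  · exact .inl (.inr (q.trans x y z hxy hyz))

lemma Agree.r_and_r_of_joinRel (h : Agree p q) (hx : x ∈ p.A ∩ q.A) (hy : y ∈ p.A ∩ q.A)
    (hxy : joinRel p q x y) : p.r x y ∧ q.r x y := by
  rcases hxy with hxy | hxy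
  · exact ⟨hxy, (h x hx y hy).1 hxy⟩
  · exact ⟨(h x hx y hy).2 hxy, hxy⟩

lemma Agree.joinRel_of_or_exists (h : Agree p q) (hC : x ∈ p.A ∩ q.A ∨ z ∈ p.A ∩ q.A)
    (hxz : joinRel p q x z ∨ ∃ c ∈ p.A ∩ q.A, joinRel p q x c ∧ joinRel p q c z) :
    joinRel p q x z := by
  obtain hxz | ⟨c, hc, hxc, hcz⟩ := hxz
  · exact hxz
  rcases hC with hx | hz
  · obtain ⟨hp, hq⟩ := h.r_and_r_of_joinRel hx hc hxc
    exact hcz.imp (p.trans x c z hp) (q.trans x c z hq)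
  · obtain ⟨hp, hq⟩ := h.r_and_r_of_joinRel hc hz hcz
    exact hxc.imp (fun hxc => p.trans x c z hxc hp) fun hxc => q.trans x c z hxc hq

/-- A path of `p`- and `q`-steps shortens to one step or to two steps through the common domain:
steps of the same kind compose, and the kind can only change at a point of the common domain. -/
lemma Agree.joinRel_or_exists_of_transGen (h : Agree p q)
    (hxy : Relation.TransGen (joinRel p q) x y) :
    joinRel p q x y ∨ ∃ c ∈ p.A ∩ q.A, joinRel p q x c ∧ joinRel p q c y := by
  induction hxy using Relation.TransGen.head_induction_on with
  | single hxy => exact .inl hxy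
  | @head x w hxw _ ih =>
    rcases ih with hwy | ⟨c, hc, hwc, hcy⟩
    · exact joinRel_or_exists_of_joinRel_of_joinRel hxw hwy
    · exact .inr ⟨c, hc, h.joinRel_of_or_exists (.inr hc)
        (joinRel_or_exists_of_joinRel_of_joinRel hxw hwc), hcy⟩

lemma Agree.joinRel_antisymm (h : Agree p q) (hxy : joinRel p q x y) (hyx : joinRel p q y x) :
    x = y := by
  rcases hxy with hxy | hxy <;> rcases hyx with hyx | hyx
  · exact p.antisymm x y hxy hyx
  · exact p.antisymm x y hxy
      (h.r_and_r_of_joinRel (mem_inter_of_r_of_r hxy hyx) (mem_inter_of_r_of_r' hyx hxy)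
        (.inr hyx)).1
  · exact q.antisymm x y hxy
      (h.r_and_r_of_joinRel (mem_inter_of_r_of_r' hxy hyx) (mem_inter_of_r_of_r hyx hxy)
        (.inl hyx)).2
  · exact q.antisymm x y hxy hyx

/-- On a cycle, a detour from `x` to `y` through a point `c` of the common domain forces `x = c`. -/
lemma Agree.joinRel_of_transGen_of_transGen (h : Agree p q)
    (hxy : Relation.TransGen (joinRel p q) x y) (hyx : Relation.TransGen (joinRel p q) y x) :
    joinRel p q x y := by
  obtain hxy' | ⟨c, hc, hxc, hcy⟩ := h.joinRel_or_exists_of_transGen hxy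
  · exact hxy'
  have hcx := h.joinRel_of_or_exists (.inl hc)
    (h.joinRel_or_exists_of_transGen (.head hcy hyx))
  obtain rfl := h.joinRel_antisymm hxc hcx
  exact h.joinRel_of_or_exists (.inl hc) (h.joinRel_or_exists_of_transGen hxy)

lemma Agree.isPartialOrder (h : Agree p q) :
    IsPartialOrder κ (Relation.ReflTransGen (joinRel p q)) where
  refl _ := .refl
  trans _ _ _ := .trans
  antisymm x y hxy hyx := by
    rcases Relation.reflTransGen_iff_eq_or_transGen.1 hxy with rfl | hxy
    · rfl
    rcases Relation.reflTransGen_iff_eq_or_transGen.1 hyx with rfl | hyx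
    · rfl
    exact h.joinRel_antisymm (h.joinRel_of_transGen_of_transGen hxy hyx)
      (h.joinRel_of_transGen_of_transGen hyx hxy)

theorem Agree.compatible (h : Agree p q) : Compatible p q := by
  have := h.isPartialOrder
  obtain ⟨s, _, hle⟩ := extend_partialOrder (Relation.ReflTransGen (joinRel p q))
  exact compatible_of_le_linearOrder s (fun x y hxy => hle x y (.single (.inl hxy)))
    fun x y hxy => hle x y (.single (.inr hxy))

end Agree

lemma exists_subset_injOn_A {S : Set (FinLinOrd κ)} (hS : ¬S.Countable) :
    ∃ S₀ ⊆ S, Set.InjOn A S₀ ∧ ¬(A '' S₀).Countable := by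
  obtain ⟨S₀, hS₀S, hbij⟩ := Set.exists_subset_bijOn S A
  exact ⟨S₀, hS₀S, hbij.injOn, hbij.image_eq ▸ not_countable_image_of_countable_fibers A hS
    fun B => ((finite_setOf_A_eq B).subset fun p hp => hp.2).countable⟩

end FinLinOrd

/-- The poset of finite partial linear orders on `κ` is Knaster: every uncountable
family of conditions has an uncountable pairwise compatible subfamily. -/
theorem knaster_finLinOrd {κ : Type*} (S : Set (FinLinOrd κ)) (hS : ¬ S.Countable) :
    ∃ T ⊆ S, ¬ T.Countable ∧ ∀ p ∈ T, ∀ q ∈ T, Compatible p q := by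
  classical
  obtain ⟨S₀, hS₀S, hinj, hS₀⟩ := exists_subset_injOn_A hS
  obtain ⟨G, hGS₀, hG, R, hR⟩ := exists_isDeltaSystem hS₀
  have hS₁ : ¬(S₀ ∩ A ⁻¹' G).Countable := fun h => hG <| by
    simpa [Set.image_inter_preimage, Set.inter_eq_right.2 hGS₀] using h.image A
  obtain ⟨ρ, hρ⟩ := exists_not_countable_fiber (fun p (x y : R) => p.r x y) hS₁
  refine ⟨_, fun p hp => hS₀S hp.1.1, hρ, fun p hp q hq => ?_⟩
  rcases eq_or_ne p q with rfl | hpq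
  · exact compatible_refl p
  refine Agree.compatible fun x hx y hy => ?_
  rw [hR hp.1.2 hq.1.2 (hinj.ne hp.1.1 hq.1.1 hpq)] at hx hy
  exact iff_of_eq (congrFun (congrFun (hp.2.trans hq.2.symm) ⟨x, hx⟩) ⟨y, hy⟩)
end

section
/- In the poset of finite partial linear orders on κ, for any infinite set I ⊆ κ and any ordinals α, β < κ, the set of conditions p such that α, β ∈ A_p and, if α <_p β, then there exists γ ∈ I ∩ A_p with α <_p γ <_p β, is dense. -/
open FinLinOrd

section Aux

open Classical

variable {κ : Type*} (p : FinLinOrd κ)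

/-- The rank of `x` in the finite linear order `p`. -/
noncomputable def rk (x : κ) : ℤ :=
  ((p.A.filter fun y => p.r y x).card : ℤ)

theorem rk_pos : ∀ x ∈ p.A, 1 ≤ rk p x := by
  intro x hx
  have : x ∈ p.A.filter fun y => p.r y x := Finset.mem_filter.mpr ⟨hx, p.refl x hx⟩
  have h := Finset.card_pos.mpr ⟨x, this⟩
  unfold rk; exact_mod_cast h

theorem rk_le : ∀ x, rk p x ≤ (p.A.card : ℤ) := by
  intro x; unfold rk; exact_mod_cast Finset.card_filter_le _ _

theorem rk_iff : ∀ x ∈ p.A, ∀ y ∈ p.A, (p.r x y ↔ rk p x ≤ rk p y) := by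
  intro x hx y hy
  constructor
  · intro hxy
    unfold rk
    have : (p.A.filter fun z => p.r z x) ⊆ p.A.filter fun z => p.r z y := by
      intro z hz
      simp only [Finset.mem_filter] at *
      exact ⟨hz.1, p.trans _ _ _ hz.2 hxy⟩
    exact_mod_cast Finset.card_le_card this
  · intro h
    by_contra hxy
    rcases p.total x hx y hy with h1 | h1
    · exact hxy h1
    have hss : (p.A.filter fun z => p.r z y) ⊂ p.A.filter fun z => p.r z x := by
      constructor
      · intro z hz
        simp only [Finset.mem_filter] at *
        exact ⟨hz.1, p.trans _ _ _ hz.2 h1⟩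
      · intro hcon
        have := hcon (Finset.mem_filter.mpr ⟨hx, p.refl x hx⟩)
        exact hxy (Finset.mem_filter.mp this).2
    have hlt := Finset.card_lt_card hss
    have : rk p y < rk p x := by unfold rk; exact_mod_cast hlt
    omega

theorem rk_inj : ∀ x ∈ p.A, ∀ y ∈ p.A, rk p x = rk p y → x = y := by
  intro x hx y hy h
  exact p.antisymm x y ((rk_iff p x hx y hy).2 h.le) ((rk_iff p y hy x hx).2 h.ge)

/-- The value assigned to `α` in the extension. -/
noncomputable def aval (α : κ) : ℤ := if α ∈ p.A then rk p α else -1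

/-- The value assigned to `β` in the extension. -/
noncomputable def bval (β : κ) : ℤ := if β ∈ p.A then rk p β else (p.A.card : ℤ) + 1

/-- The value assigned to the fresh element `γ` in the extension. -/
noncomputable def cval (α β : κ) : ℚ :=
  if aval p α < bval p β then (aval p α : ℚ) + 1/2 else (p.A.card : ℚ) + 3

/-- The rational embedding of the extended condition. -/
noncomputable def gfun (α β γ x : κ) : ℚ :=
  if x = γ then cval p α β
  else if x = α then (aval p α : ℚ)
  else if x = β then (bval p β : ℚ)
  else (rk p x : ℚ)

theorem aval_le (α : κ) : aval p α ≤ (p.A.card : ℤ) := by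
  unfold aval; split
  · exact rk_le p α
  · have : (0:ℤ) ≤ p.A.card := Int.ofNat_nonneg _
    omega

theorem bval_le (β : κ) : bval p β ≤ (p.A.card : ℤ) + 1 := by
  unfold bval; split
  · have := rk_le p β; omega
  · omega

theorem ab_eq (α β : κ) (h : aval p α = bval p β) : α = β := by
  unfold aval bval at h
  have h0 : (0:ℤ) ≤ p.A.card := Int.ofNat_nonneg _
  split at h <;> split at h
  · exact rk_inj p α ‹_› β ‹_› h
  · have := rk_le p α; omega
  · have := rk_pos p β ‹_›; omega
  · omega

theorem af_eq (α : κ) (x : κ) (hx : x ∈ p.A) (h : aval p α = rk p x) : α = x := by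
  unfold aval at h
  split at h
  · exact rk_inj p α ‹_› x hx h
  · have := rk_pos p x hx; omega

theorem bf_eq (β : κ) (x : κ) (hx : x ∈ p.A) (h : bval p β = rk p x) : β = x := by
  unfold bval at h
  split at h
  · exact rk_inj p β ‹_› x hx h
  · have := rk_le p x; omega

theorem cval_ne (α β : κ) (m : ℤ) (hm : m ≤ (p.A.card : ℤ) + 1) : cval p α β ≠ (m : ℚ) := by
  unfold cval; split
  · intro h
    have h2 : ((2 * aval p α + 1 : ℤ) : ℚ) = ((2 * m : ℤ) : ℚ) := by push_cast; linarith
    have := Int.cast_injective (α := ℚ) h2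
    omega
  · intro h
    have h2 : (((p.A.card : ℤ) + 3 : ℤ) : ℚ) = ((m : ℤ) : ℚ) := by push_cast; linarith
    have := Int.cast_injective (α := ℚ) h2
    omega

theorem gfun_int (α β γ : κ) (hγα : α ≠ γ) (hγβ : β ≠ γ) (hγA : γ ∉ p.A) :
    ∀ x, (x = α ∨ x = β ∨ x ∈ p.A) →
    ∃ m : ℤ, gfun p α β γ x = (m : ℚ) ∧ m ≤ (p.A.card : ℤ) + 1 ∧
      ((x = α ∧ m = aval p α) ∨ (x = β ∧ m = bval p β) ∨
        (x ∈ p.A ∧ m = rk p x)) := by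
  intro x hx
  by_cases hxα : x = α
  · subst hxα
    refine ⟨aval p x, ?_, ?_, Or.inl ⟨rfl, rfl⟩⟩
    · unfold gfun; rw [if_neg hγα, if_pos rfl]
    · have := aval_le p x; omega
  · by_cases hxβ : x = β
    · subst hxβ
      refine ⟨bval p x, ?_, bval_le p x, Or.inr (Or.inl ⟨rfl, rfl⟩)⟩
      unfold gfun; rw [if_neg hγβ, if_neg hxα, if_pos rfl]
    · have hxA : x ∈ p.A := by tauto
      have hxγ : x ≠ γ := fun e => hγA (e ▸ hxA)
      refine ⟨rk p x, ?_, ?_, Or.inr (Or.inr ⟨hxA, rfl⟩)⟩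
      · unfold gfun; rw [if_neg hxγ, if_neg hxα, if_neg hxβ]
      · have := rk_le p x; omega

theorem g_inj (α β γ : κ) (hγα : α ≠ γ) (hγβ : β ≠ γ) (hγA : γ ∉ p.A) :
    ∀ x, (x = γ ∨ x = α ∨ x = β ∨ x ∈ p.A) →
    ∀ y, (y = γ ∨ y = α ∨ y = β ∨ y ∈ p.A) →
    gfun p α β γ x = gfun p α β γ y → x = y := by
  have hgγ : gfun p α β γ γ = cval p α β := by unfold gfun; rw [if_pos rfl]
  intro x hx y hy h
  by_cases hxγ : x = γ <;> by_cases hyγ : y = γ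
  · rw [hxγ, hyγ]
  · exfalso
    obtain ⟨m, hm1, hm2, _⟩ := gfun_int p α β γ hγα hγβ hγA y (hy.resolve_left hyγ)
    rw [hxγ, hgγ] at h
    exact cval_ne p α β m hm2 (by rw [h, hm1])
  · exfalso
    obtain ⟨m, hm1, hm2, _⟩ := gfun_int p α β γ hγα hγβ hγA x (hx.resolve_left hxγ)
    rw [hyγ, hgγ] at h
    exact cval_ne p α β m hm2 (by rw [← h, hm1])
  · obtain ⟨m, hm1, hm2, hmc⟩ := gfun_int p α β γ hγα hγβ hγA x (hx.resolve_left hxγ)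
    obtain ⟨n, hn1, hn2, hnc⟩ := gfun_int p α β γ hγα hγβ hγA y (hy.resolve_left hyγ)
    have hmn : m = n := Int.cast_injective (α := ℚ) (by rw [← hm1, ← hn1, h])
    rcases hmc with ⟨hxa, hma⟩ | ⟨hxb, hmb⟩ | ⟨hxA, hmr⟩ <;>
      rcases hnc with ⟨hya, hna⟩ | ⟨hyb, hnb⟩ | ⟨hyA, hnr⟩
    · rw [hxa, hya]
    · rw [hxa, hyb]; exact ab_eq p α β (by omega)
    · rw [hxa]; exact af_eq p α y hyA (by omega)
    · rw [hxb, hya]; exact (ab_eq p α β (by omega)).symm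
    · rw [hxb, hyb]
    · rw [hxb]; exact bf_eq p β y hyA (by omega)
    · rw [hya]; exact (af_eq p α x hxA (by omega)).symm
    · rw [hyb]; exact (bf_eq p β x hxA (by omega)).symm
    · exact rk_inj p x hxA y hyA (by omega)

theorem gfun_A (α β γ : κ) (hγA : γ ∉ p.A) :
    ∀ x ∈ p.A, gfun p α β γ x = (rk p x : ℚ) := by
  intro x hx
  have hxγ : x ≠ γ := fun e => hγA (e ▸ hx)
  unfold gfun
  rw [if_neg hxγ]
  by_cases hxα : x = α
  · subst hxα; rw [if_pos rfl]; unfold aval; rw [if_pos hx]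
  · rw [if_neg hxα]
    by_cases hxβ : x = β
    · subst hxβ; rw [if_pos rfl]; unfold bval; rw [if_pos hx]
    · rw [if_neg hxβ]

end Aux

/-- For any infinite `I ⊆ κ` and `α, β`, the set of conditions `q` with
`α, β ∈ A_q` such that if `α <_q β` then some `γ ∈ I ∩ A_q` lies strictly
between `α` and `β`, is dense. -/
theorem dense_between {κ : Type*} (I : Set κ) (hI : I.Infinite) (α β : κ)
    (p : FinLinOrd κ) :
    ∃ q : FinLinOrd κ, q.Ext p ∧ α ∈ q.A ∧ β ∈ q.A ∧
      ((q.r α β ∧ α ≠ β) →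
        ∃ γ ∈ I, γ ∈ q.A ∧ q.r α γ ∧ q.r γ β ∧ γ ≠ α ∧ γ ≠ β) := by
  classical
  obtain ⟨γ, hγ⟩ :=
    (hI.diff ((p.A.finite_toSet.union (Set.finite_singleton α)).union
      (Set.finite_singleton β))).nonempty
  have hγI : γ ∈ I := hγ.1
  have hγA : γ ∉ p.A := fun h => hγ.2 (Or.inl (Or.inl h))
  have hγα : α ≠ γ := fun h => hγ.2 (Or.inl (Or.inr h.symm))
  have hγβ : β ≠ γ := fun h => hγ.2 (Or.inr h.symm)
  set B : Finset κ := insert γ (insert α (insert β p.A)) with hB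
  have memB : ∀ x, x ∈ B ↔ (x = γ ∨ x = α ∨ x = β ∨ x ∈ p.A) := by
    intro x; simp [hB]
  have hAB : p.A ⊆ B := fun x hx => (memB x).2 (Or.inr (Or.inr (Or.inr hx)))
  refine ⟨⟨B, fun x y => x ∈ B ∧ y ∈ B ∧ gfun p α β γ x ≤ gfun p α β γ y,
      fun x y h => ⟨h.1, h.2.1⟩,
      fun x hx => ⟨hx, hx, le_refl _⟩,
      fun x y h1 h2 => g_inj p α β γ hγα hγβ hγA x ((memB x).1 h1.1) y
        ((memB y).1 h1.2.1) (le_antisymm h1.2.2 h2.2.2),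
      fun x y z h1 h2 => ⟨h1.1, h2.2.1, le_trans h1.2.2 h2.2.2⟩,
      fun x hx y hy => (le_total (gfun p α β γ x) (gfun p α β γ y)).imp
        (fun h => ⟨hx, hy, h⟩) (fun h => ⟨hy, hx, h⟩)⟩,
    ⟨hAB, ?_⟩, (memB α).2 (Or.inr (Or.inl rfl)), (memB β).2 (Or.inr (Or.inr (Or.inl rfl))), ?_⟩
  · intro x hx y hy
    constructor
    · intro hr
      refine ⟨hAB hx, hAB hy, ?_⟩
      rw [gfun_A p α β γ hγA x hx, gfun_A p α β γ hγA y hy]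
      exact_mod_cast (rk_iff p x hx y hy).1 hr
    · rintro ⟨-, -, hle⟩
      rw [gfun_A p α β γ hγA x hx, gfun_A p α β γ hγA y hy] at hle
      exact (rk_iff p x hx y hy).2 (by exact_mod_cast hle)
  · rintro ⟨⟨hαB, hβB, hle⟩, hne⟩
    have hgα : gfun p α β γ α = (aval p α : ℚ) := by
      unfold gfun; rw [if_neg hγα, if_pos rfl]
    have hgβ : gfun p α β γ β = (bval p β : ℚ) := by
      unfold gfun; rw [if_neg hγβ, if_neg (Ne.symm hne), if_pos rfl]
    rw [hgα, hgβ] at hle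
    have hab : aval p α ≤ bval p β := by exact_mod_cast hle
    have hablt : aval p α < bval p β :=
      lt_of_le_of_ne hab (fun e => hne (ab_eq p α β e))
    have hgγ : gfun p α β γ γ = (aval p α : ℚ) + 1/2 := by
      unfold gfun; rw [if_pos rfl]; unfold cval; rw [if_pos hablt]
    have hγB : γ ∈ B := (memB γ).2 (Or.inl rfl)
    have hstep : ((aval p α : ℚ)) + 1 ≤ (bval p β : ℚ) := by exact_mod_cast hablt
    refine ⟨γ, hγI, hγB, ⟨hαB, hγB, ?_⟩, ⟨hγB, hβB, ?_⟩,
      fun e => hγα e.symm, fun e => hγβ e.symm⟩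
    · rw [hgα, hgγ]; linarith
    · rw [hgγ, hgβ]; linarith
end
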